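/- Let ℓ : ℝ → ℝ be a decreasing function and η > 1/2. For any α ≤ −α₀ < 0, the conditional risk satisfies C_η(α) − C_η(−α) ≥ (2η − 1)(ℓ(0) − ℓ(α₀)), where C_η(α) = η ℓ(α) + (1 − η) ℓ(−α). In particular, if ℓ(α₀) < ℓ(0), flipping the sign of α strictly decreases C_η. -/

import Mathlib

/-- The conditional risk `C_η(α) = η ℓ(α) + (1 − η) ℓ(−α)`. -/
noncomputable def Crisk (ℓ : ℝ → ℝ) (η α : ℝ) : ℝ := η * ℓ α + (1 - η) * ℓ (-α)

theorem Crisk_sub_Crisk_neg (ℓ : ℝ → ℝ) (η α : ℝ) :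
    Crisk ℓ η α - Crisk ℓ η (-α) = (2 * η - 1) * (ℓ α - ℓ (-α)) := by
  simp only [Crisk, neg_neg]
  ring

theorem Antitone.sub_le_sub_neg_of_le_neg {ℓ : ℝ → ℝ} (hℓ : Antitone ℓ) {α₀ α : ℝ}
    (hα₀ : 0 ≤ α₀) (hα : α ≤ -α₀) : ℓ 0 - ℓ α₀ ≤ ℓ α - ℓ (-α) :=
  sub_le_sub (hℓ (hα.trans (neg_nonpos.mpr hα₀))) (hℓ (le_neg.mp hα))

theorem stmt11_general (ℓ : ℝ → ℝ) (hanti : Antitone ℓ) (η : ℝ) (hη : 1 / 2 < η)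
    (α₀ : ℝ) (hα₀ : 0 < α₀) (α : ℝ) (hα : α ≤ -α₀) :
    (2 * η - 1) * (ℓ 0 - ℓ α₀) ≤ Crisk ℓ η α - Crisk ℓ η (-α) ∧
    (ℓ α₀ < ℓ 0 → Crisk ℓ η (-α) < Crisk ℓ η α) := by
  have hgap := hanti.sub_le_sub_neg_of_le_neg hα₀.le hα
  have hη' : 0 < 2 * η - 1 := by linarith
  refine ⟨?_, fun hlt => ?_⟩
  · rw [Crisk_sub_Crisk_neg]
    exact mul_le_mul_of_nonneg_left hgap hη'.le
  · rw [← sub_pos, Crisk_sub_Crisk_neg]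
    exact mul_pos hη' (by linarith)

/-- Sign-flipping inequality: for decreasing `ℓ`, `η > 1/2`, `α ≤ −α₀ < 0`,
`C_η(α) − C_η(−α) ≥ (2η − 1)(ℓ(0) − ℓ(α₀))`; in particular if `ℓ(α₀) < ℓ(0)` then
flipping the sign of `α` strictly decreases `C_η`. -/
theorem stmt11 (ℓ : ℝ → ℝ) (hanti : Antitone ℓ) (η : ℝ) (hη : 1 / 2 < η) (hη1 : η ≤ 1)
    (α₀ : ℝ) (hα₀ : 0 < α₀) (α : ℝ) (hα : α ≤ -α₀) :
    (2 * η - 1) * (ℓ 0 - ℓ α₀) ≤ Crisk ℓ η α - Crisk ℓ η (-α) ∧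
    (ℓ α₀ < ℓ 0 → Crisk ℓ η (-α) < Crisk ℓ η α) :=
  stmt11_general ℓ hanti η hη α₀ hα₀ α hα
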